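/- Let H be a non-trivial projective core with vertex set {z_1,...,z_k}, let F := H^{k(k-1)}, u* := (z_1^{k-1},...,z_k^{k-1}) (each z_i repeated k−1 times), and v* := (z̄_1,...,z̄_k) where z̄_i lists all vertices except z_i. Then: (a) for every pair of distinct vertices x, y of H there is a homomorphism f : F → H with f(u*) = x and f(v*) = y; and (b) every homomorphism f : F → H satisfies f(u*) ≠ f(v*). -/

import Mathlib

/-! Every homomorphism `f : H^ι → H` from a power of a projective core factors as
`a ↦ f (const (a i))` for a fixed coordinate `i`: the diagonal `x ↦ f (const x)` is an
endomorphism of the core, hence an automorphism, and undoing it makes `f` idempotent, hence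
a projection. Since `u*` and `v*` differ in every coordinate, no homomorphism identifies them,
while the projections realise every pair of distinct vertices. -/

/-- The direct power of a graph `H`, indexed by a nonempty type `ι`. -/
def graphPow {α : Type} (ι : Type) (hι : Nonempty ι) (H : SimpleGraph α) :
    SimpleGraph (ι → α) where
  Adj a b := ∀ i, H.Adj (a i) (b i)
  symm := ⟨fun _ _ h i => (h i).symm⟩
  loopless := ⟨fun a h => H.loopless.irrefl (a hι.some) (h hι.some)⟩

namespace graphPow

variable {V ι κ : Type} {H : SimpleGraph V} {hι : Nonempty ι}

def diag (hι : Nonempty ι) (H : SimpleGraph V) : H →g graphPow ι hι H :=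
  ⟨fun x _ => x, fun h _ => h⟩

def eval (i : ι) : graphPow ι hι H →g H :=
  ⟨fun a => a i, fun h => h i⟩

@[simps]
def comap (e : ι → κ) (hκ : Nonempty κ) : graphPow κ hκ H →g graphPow ι hι H :=
  ⟨fun a => a ∘ e, fun h i => h (e i)⟩

end graphPow

namespace SimpleGraph

variable {V ι : Type} {H : SimpleGraph V}

def IsCore (H : SimpleGraph V) : Prop :=
  ∀ g : H →g H, Function.Bijective g

def IsProjective (H : SimpleGraph V) : Prop :=
  ∀ (m : ℕ) (hm : 2 ≤ m) (f : graphPow (Fin m) ⟨⟨0, Nat.zero_lt_of_lt hm⟩⟩ H →g H),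
    (∀ x, f (fun _ => x) = x) → ∃ i : Fin m, ∀ a, f a = a i

/-- An injective endomorphism of a finite graph permutes its (finitely many) edges. -/
theorem Hom.map_adj_iff_of_injective [Finite V] (g : H →g H) (hg : Function.Injective g)
    {a b : V} : H.Adj (g a) (g b) ↔ H.Adj a b := by
  refine ⟨fun hab => ?_, g.map_rel⟩
  let φ : {p : V × V // H.Adj p.1 p.2} → {p : V × V // H.Adj p.1 p.2} :=
    fun p => ⟨(g p.1.1, g p.1.2), g.map_rel p.2⟩
  have hφ : Function.Injective φ := fun p q hpq => by
    simp only [φ, Subtype.mk.injEq, Prod.mk.injEq] at hpq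
    exact Subtype.ext (Prod.ext (hg hpq.1) (hg hpq.2))
  obtain ⟨⟨⟨a', b'⟩, hab'⟩, hp⟩ := Finite.surjective_of_injective hφ ⟨(g a, g b), hab⟩
  simp only [φ, Subtype.mk.injEq, Prod.mk.injEq] at hp
  rwa [← hg hp.1, ← hg hp.2]

noncomputable def Iso.ofBijectiveHom [Finite V] (g : H →g H) (hg : Function.Bijective g) :
    H ≃g H where
  toEquiv := Equiv.ofBijective g hg
  map_rel_iff' := g.map_adj_iff_of_injective hg.1

theorem IsProjective.exists_eq_apply [Finite ι] (hproj : H.IsProjective) {hι : Nonempty ι}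
    (hcard : 2 ≤ Nat.card ι) (f : graphPow ι hι H →g H) (hf : ∀ x, f (fun _ => x) = x) :
    ∃ i : ι, ∀ a, f a = a i := by
  let ε := Finite.equivFin ι
  obtain ⟨j, hj⟩ := hproj _ hcard (f.comp (graphPow.comap ε _)) hf
  refine ⟨ε.symm j, fun a => ?_⟩
  calc f a = f (graphPow.comap ε _ (a ∘ ε.symm)) := congrArg f (funext fun x => by simp)
    _ = a (ε.symm j) := hj _

theorem IsProjective.exists_eq_apply_const [Finite V] [Finite ι] (hcore : H.IsCore)
    (hproj : H.IsProjective) {hι : Nonempty ι} (hcard : 2 ≤ Nat.card ι)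
    (f : graphPow ι hι H →g H) : ∃ i : ι, ∀ a, f a = f (fun _ => a i) := by
  let d := Iso.ofBijectiveHom (f.comp (graphPow.diag hι H)) (hcore _)
  obtain ⟨i, hi⟩ := hproj.exists_eq_apply hcard (d.symm.toHom.comp f)
    fun x => d.symm_apply_apply x
  refine ⟨i, fun a => ?_⟩
  calc f a = d (d.symm (f a)) := (d.apply_symm_apply _).symm
    _ = f (fun _ => a i) := congrArg d (hi a)

end SimpleGraph

/-- Let `H` be a non-trivial projective core on the `k + 1 ≥ 3`
vertices `Fin (k+1)`, and let `F := H^{(k+1)k}` with coordinates indexed by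
`Fin (k+1) × Fin k`. Let `u*` be the tuple whose `(i,j)` coordinate is `i`
(each vertex repeated `k` times) and `v*` the tuple whose `(i,j)` coordinate is
`i.succAbove j` (the `j`-th vertex different from `i`, so `v̄ᵢ` lists all vertices
except `i`). Then (a) for all distinct `x, y` some homomorphism `F → H` sends
`u* ↦ x` and `v* ↦ y`, and (b) every homomorphism `F → H` sends `u*` and `v*`
to distinct vertices. -/
theorem projective_core_edge_gadget (k : ℕ) (hk : 2 ≤ k)
    (H : SimpleGraph (Fin (k + 1)))
    (hcore : ∀ f : H →g H, Function.Bijective f)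
    (hproj : ∀ (m : ℕ) (hm : 2 ≤ m)
      (f : graphPow (Fin m) ⟨⟨0, by omega⟩⟩ H →g H),
      (∀ x, f (fun _ => x) = x) → ∃ i : Fin m, ∀ a, f a = a i) :
    let F := graphPow (Fin (k + 1) × Fin k) ⟨(0, ⟨0, by omega⟩)⟩ H
    let ustar : Fin (k + 1) × Fin k → Fin (k + 1) := fun p => p.1
    let vstar : Fin (k + 1) × Fin k → Fin (k + 1) := fun p => p.1.succAbove p.2
    (∀ x y : Fin (k + 1), x ≠ y → ∃ f : F →g H, f ustar = x ∧ f vstar = y) ∧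
    (∀ f : F →g H, f ustar ≠ f vstar) := by
  intro F ustar vstar
  refine ⟨fun x y hxy => ?_, fun f hf => ?_⟩
  · obtain ⟨j, hj⟩ := Fin.exists_succAbove_eq hxy.symm
    exact ⟨graphPow.eval (x, j), rfl, hj⟩
  · have hcard : 2 ≤ Nat.card (Fin (k + 1) × Fin k) := by
      simp only [Nat.card_eq_fintype_card, Fintype.card_prod, Fintype.card_fin]; nlinarith
    obtain ⟨i, hi⟩ := SimpleGraph.IsProjective.exists_eq_apply_const hcore hproj hcard f
    have hdiag := (hcore (f.comp (graphPow.diag _ H))).1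
    exact Fin.succAbove_ne i.1 i.2 (hdiag ((hi ustar).symm.trans (hf.trans (hi vstar)))).symm
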